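/- arXiv:2304.02005 — 7 statements merged into one kernel-verified Lean document; each statement's English description precedes it below -/
import Mathlib

section
/- Contraction of the CVaR Bellman operator (Lemma 1): for any two bounded functions Q1, Q2 : S × A × [0,1] → ℝ, and for all s ∈ S, a ∈ A and y ∈ (0,1], one has |T[Q1](s,a,y) − T[Q2](s,a,y)| ≤ γ · sup_{(s',a',y') ∈ S × A × [0,1]} |Q1(s',a',y') − Q2(s',a',y')|. -/
/-!
Both the inner supremum over the risk envelope and the outer minimum over actions are
1-Lipschitz for the sup-norm: every `ξ` in `U(y, p)` turns `p` into the probability weights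
`ξ · p`, and `y · ξ` stays in `[0, 1]`, so a uniform bound `D` on `|Q₁ - Q₂|` over
`S × A × [0, 1]` passes through the weighted sums, then the supremum, then the minimum.
Multiplying by `γ ≥ 0` gives the contraction.
-/

noncomputable section

/-- The CVaR risk envelope `U(y, p)`. -/
def riskEnv {Ω : Type*} [Fintype Ω] (y : ℝ) (p : Ω → ℝ) : Set (Ω → ℝ) :=
  {ξ | (∀ ω, 0 ≤ ξ ω ∧ ξ ω ≤ 1 / y) ∧ ∑ ω, ξ ω * p ω = 1}

/-- The CVaR Bellman operator `T`. -/
def bellman {S A : Type*} [Fintype S] [Fintype A] [Nonempty A]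
    (P : S → A → S → ℝ) (c : S → A → ℝ) (γ : ℝ)
    (Q : S → A → ℝ → ℝ) (s : S) (a : A) (y : ℝ) : ℝ :=
  c s a + γ * Finset.univ.inf' Finset.univ_nonempty (fun a' : A =>
    sSup ((fun ξ : S → ℝ => ∑ s', ξ s' * P s a s' * Q s' a' (y * ξ s')) ''
      riskEnv y (P s a)))

open Finset Set

theorem abs_sum_mul_le_of_abs_le {ι : Type*} [Fintype ι] {w f : ι → ℝ} {D : ℝ}
    (hw : ∀ i, 0 ≤ w i) (hw1 : ∑ i, w i = 1) (hf : ∀ i, |f i| ≤ D) :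
    |∑ i, w i * f i| ≤ D :=
  calc |∑ i, w i * f i| ≤ ∑ i, w i * |f i| := by
        simpa only [abs_mul, abs_of_nonneg (hw _)] using
          abs_sum_le_sum_abs (fun i => w i * f i) univ
    _ ≤ ∑ i, w i * D := sum_le_sum fun i _ => mul_le_mul_of_nonneg_left (hf i) (hw i)
    _ = D := by rw [← sum_mul, hw1, one_mul]

theorem csSup_image_le_csSup_image_add {X : Type*} {U : Set X} (hU : U.Nonempty)
    {F G : X → ℝ} (hG : BddAbove (G '' U)) {D : ℝ} (h : ∀ x ∈ U, F x ≤ G x + D) :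
    sSup (F '' U) ≤ sSup (G '' U) + D :=
  csSup_le (hU.image F) <| forall_mem_image.2 fun x hx =>
    (h x hx).trans (by gcongr; exact le_csSup hG (mem_image_of_mem G hx))

theorem abs_csSup_image_sub_csSup_image_le {X : Type*} {U : Set X} (hU : U.Nonempty)
    {F G : X → ℝ} (hF : BddAbove (F '' U)) (hG : BddAbove (G '' U)) {D : ℝ}
    (h : ∀ x ∈ U, |F x - G x| ≤ D) :
    |sSup (F '' U) - sSup (G '' U)| ≤ D := by
  rw [abs_sub_le_iff, sub_le_iff_le_add', sub_le_iff_le_add']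
  exact ⟨csSup_image_le_csSup_image_add hU hG fun x hx =>
      sub_le_iff_le_add'.1 (abs_sub_le_iff.1 (h x hx)).1,
    csSup_image_le_csSup_image_add hU hF fun x hx =>
      sub_le_iff_le_add'.1 (abs_sub_le_iff.1 (h x hx)).2⟩

theorem abs_inf'_sub_inf'_le {ι α : Type*} [AddCommGroup α] [LinearOrder α]
    [IsOrderedAddMonoid α] {s : Finset ι} (hs : s.Nonempty) {f g : ι → α} {D : α}
    (h : ∀ i ∈ s, |f i - g i| ≤ D) :
    |s.inf' hs f - s.inf' hs g| ≤ D := by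
  rw [abs_sub_le_iff, sub_le_comm, sub_le_comm (b := s.inf' hs f)]
  constructor
  · exact le_inf' hs _ fun i hi =>
      (sub_le_sub_right (inf'_le f hi) D).trans (sub_le_comm.1 (abs_sub_le_iff.1 (h i hi)).1)
  · exact le_inf' hs _ fun i hi =>
      (sub_le_sub_right (inf'_le g hi) D).trans (sub_le_comm.1 (abs_sub_le_iff.1 (h i hi)).2)

section RiskEnvelope

variable {Ω : Type*} [Fintype Ω] {y : ℝ} {p ξ : Ω → ℝ}

theorem one_mem_riskEnv (hy0 : 0 < y) (hy1 : y ≤ 1) (hp : ∑ ω, p ω = 1) :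
    1 ∈ riskEnv y p :=
  ⟨fun _ => ⟨zero_le_one, by rw [Pi.one_apply, le_div_iff₀ hy0, one_mul]; exact hy1⟩,
    by simpa using hp⟩

theorem mul_mem_Icc_of_mem_riskEnv (hy : 0 < y) (hξ : ξ ∈ riskEnv y p) (ω : Ω) :
    y * ξ ω ∈ Icc (0 : ℝ) 1 :=
  ⟨mul_nonneg hy.le (hξ.1 ω).1, by
    calc y * ξ ω ≤ y * (1 / y) := mul_le_mul_of_nonneg_left (hξ.1 ω).2 hy.le
      _ = 1 := by field_simp⟩

theorem abs_sum_riskEnv_mul_le (hp : ∀ ω, 0 ≤ p ω) (hξ : ξ ∈ riskEnv y p)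
    {f : Ω → ℝ} {D : ℝ} (hf : ∀ ω, |f ω| ≤ D) :
    |∑ ω, ξ ω * p ω * f ω| ≤ D :=
  abs_sum_mul_le_of_abs_le (fun ω => mul_nonneg (hξ.1 ω).1 (hp ω)) hξ.2 hf

end RiskEnvelope

section Bellman

variable {S A : Type*} [Fintype S] {P : S → A → S → ℝ} {s : S} {a a' : A} {y : ℝ}

def envelopeSup (P : S → A → S → ℝ) (Q : S → A → ℝ → ℝ) (s : S) (a : A) (y : ℝ) (a' : A) :
    ℝ :=
  sSup ((fun ξ : S → ℝ => ∑ s', ξ s' * P s a s' * Q s' a' (y * ξ s')) '' riskEnv y (P s a))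

theorem bellman_eq_add_inf'_envelopeSup [Fintype A] [Nonempty A] (c : S → A → ℝ) (γ : ℝ)
    (Q : S → A → ℝ → ℝ) :
    bellman P c γ Q s a y = c s a + γ * univ.inf' univ_nonempty (envelopeSup P Q s a y) :=
  rfl

theorem bddAbove_envelope_image (hP : ∀ s', 0 ≤ P s a s') (hy : 0 < y)
    {Q : S → A → ℝ → ℝ} {B : ℝ} (hB : ∀ s a, ∀ y ∈ Icc (0 : ℝ) 1, |Q s a y| ≤ B) :
    BddAbove ((fun ξ : S → ℝ => ∑ s', ξ s' * P s a s' * Q s' a' (y * ξ s')) ''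
      riskEnv y (P s a)) :=
  ⟨B, forall_mem_image.2 fun _ hξ => (le_abs_self _).trans <|
    abs_sum_riskEnv_mul_le hP hξ fun s' => hB _ _ _ (mul_mem_Icc_of_mem_riskEnv hy hξ s')⟩

theorem abs_envelopeSup_sub_le (hP : ∀ s', 0 ≤ P s a s') (hP1 : ∑ s', P s a s' = 1)
    (hy : y ∈ Ioc (0 : ℝ) 1) {Q1 Q2 : S → A → ℝ → ℝ} {B1 B2 D : ℝ}
    (hB1 : ∀ s a, ∀ y ∈ Icc (0 : ℝ) 1, |Q1 s a y| ≤ B1)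
    (hB2 : ∀ s a, ∀ y ∈ Icc (0 : ℝ) 1, |Q2 s a y| ≤ B2)
    (hD : ∀ s a, ∀ y ∈ Icc (0 : ℝ) 1, |Q1 s a y - Q2 s a y| ≤ D) :
    |envelopeSup P Q1 s a y a' - envelopeSup P Q2 s a y a'| ≤ D :=
  abs_csSup_image_sub_csSup_image_le ⟨1, one_mem_riskEnv hy.1 hy.2 hP1⟩
    (bddAbove_envelope_image hP hy.1 hB1) (bddAbove_envelope_image hP hy.1 hB2)
    fun ξ hξ => by
      simpa only [mul_sub, sum_sub_distrib] using abs_sum_riskEnv_mul_le hP hξ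
        fun s' => hD _ _ _ (mul_mem_Icc_of_mem_riskEnv hy.1 hξ s')

end Bellman

theorem bellman_contraction_general {S A : Type*} [Fintype S] [Fintype A] [Nonempty A]
    (P : S → A → S → ℝ)
    (hP : ∀ s a, (∀ s', 0 ≤ P s a s') ∧ ∑ s', P s a s' = 1)
    (c : S → A → ℝ) {γ : ℝ} (hγ0 : 0 ≤ γ)
    (Q1 Q2 : S → A → ℝ → ℝ)
    (hb1 : ∃ B : ℝ, ∀ s a, ∀ y ∈ Set.Icc (0:ℝ) 1, |Q1 s a y| ≤ B)
    (hb2 : ∃ B : ℝ, ∀ s a, ∀ y ∈ Set.Icc (0:ℝ) 1, |Q2 s a y| ≤ B) :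
    ∀ s a, ∀ y ∈ Set.Ioc (0:ℝ) 1,
      |bellman P c γ Q1 s a y - bellman P c γ Q2 s a y|
        ≤ γ * sSup {d : ℝ | ∃ s' a', ∃ y' ∈ Set.Icc (0:ℝ) 1,
            d = |Q1 s' a' y' - Q2 s' a' y'|} := by
  obtain ⟨B1, hB1⟩ := hb1
  obtain ⟨B2, hB2⟩ := hb2
  set E := {d : ℝ | ∃ s' a', ∃ y' ∈ Set.Icc (0:ℝ) 1, d = |Q1 s' a' y' - Q2 s' a' y'|}
  have hE : BddAbove E := ⟨B1 + B2, by
    rintro _ ⟨s', a', y', hy', rfl⟩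
    exact (abs_sub _ _).trans (add_le_add (hB1 _ _ _ hy') (hB2 _ _ _ hy'))⟩
  have hD : ∀ s a, ∀ y ∈ Icc (0 : ℝ) 1, |Q1 s a y - Q2 s a y| ≤ sSup E :=
    fun s a y hy => le_csSup hE ⟨s, a, y, hy, rfl⟩
  intro s a y hy
  rw [bellman_eq_add_inf'_envelopeSup, bellman_eq_add_inf'_envelopeSup, add_sub_add_left_eq_sub,
    ← mul_sub, abs_mul, abs_of_nonneg hγ0]
  exact mul_le_mul_of_nonneg_left (abs_inf'_sub_inf'_le _ fun a' _ =>
    abs_envelopeSup_sub_le (hP s a).1 (hP s a).2 hy hB1 hB2 hD) hγ0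

/-- Contraction of the CVaR Bellman operator (Lemma 1). -/
theorem bellman_contraction {S A : Type*} [Fintype S] [Fintype A] [Nonempty S] [Nonempty A]
    (P : S → A → S → ℝ)
    (hP : ∀ s a, (∀ s', 0 ≤ P s a s') ∧ ∑ s', P s a s' = 1)
    (c : S → A → ℝ) {γ : ℝ} (hγ0 : 0 ≤ γ) (hγ1 : γ < 1)
    (Q1 Q2 : S → A → ℝ → ℝ)
    (hb1 : ∃ B : ℝ, ∀ s a, ∀ y ∈ Set.Icc (0:ℝ) 1, |Q1 s a y| ≤ B)
    (hb2 : ∃ B : ℝ, ∀ s a, ∀ y ∈ Set.Icc (0:ℝ) 1, |Q2 s a y| ≤ B) :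
    ∀ s a, ∀ y ∈ Set.Ioc (0:ℝ) 1,
      |bellman P c γ Q1 s a y - bellman P c γ Q2 s a y|
        ≤ γ * sSup {d : ℝ | ∃ s' a', ∃ y' ∈ Set.Icc (0:ℝ) 1,
            d = |Q1 s' a' y' - Q2 s' a' y'|} :=
  bellman_contraction_general P hP c hγ0 Q1 Q2 hb1 hb2
end
end

section
/- Uniqueness of the fixed point of the CVaR Bellman operator (part of Theorem 1): if Q1, Q2 : S × A × [0,1] → ℝ are bounded functions satisfying T[Q1](s,a,y) = Q1(s,a,y) and T[Q2](s,a,y) = Q2(s,a,y) for all s ∈ S, a ∈ A, y ∈ (0,1], then Q1(s,a,y) = Q2(s,a,y) for all s ∈ S, a ∈ A, y ∈ (0,1]. -/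
noncomputable section

lemma inf'_le_inf'_add {A : Type*} [Fintype A] [Nonempty A] (f g : A → ℝ) (M : ℝ)
    (h : ∀ a, f a ≤ g a + M) :
    Finset.univ.inf' Finset.univ_nonempty f ≤ Finset.univ.inf' Finset.univ_nonempty g + M := by
  obtain ⟨a, -, ha⟩ := Finset.exists_mem_eq_inf' (Finset.univ_nonempty (α := A)) g
  calc Finset.univ.inf' Finset.univ_nonempty f ≤ f a := Finset.inf'_le _ (Finset.mem_univ a)
    _ ≤ g a + M := h a
    _ = Finset.univ.inf' Finset.univ_nonempty g + M := by rw [← ha]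

/-- Uniqueness of the fixed point of the CVaR Bellman operator (part of Theorem 1). -/
theorem bellman_fixed_point_unique {S A : Type*} [Fintype S] [Fintype A] [Nonempty S] [Nonempty A]
    (P : S → A → S → ℝ)
    (hP : ∀ s a, (∀ s', 0 ≤ P s a s') ∧ ∑ s', P s a s' = 1)
    (c : S → A → ℝ) {γ : ℝ} (hγ0 : 0 ≤ γ) (hγ1 : γ < 1)
    (Q1 Q2 : S → A → ℝ → ℝ)
    (hb1 : ∃ B : ℝ, ∀ s a, ∀ y ∈ Set.Icc (0:ℝ) 1, |Q1 s a y| ≤ B)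
    (hb2 : ∃ B : ℝ, ∀ s a, ∀ y ∈ Set.Icc (0:ℝ) 1, |Q2 s a y| ≤ B)
    (hfix1 : ∀ s a, ∀ y ∈ Set.Ioc (0:ℝ) 1, bellman P c γ Q1 s a y = Q1 s a y)
    (hfix2 : ∀ s a, ∀ y ∈ Set.Ioc (0:ℝ) 1, bellman P c γ Q2 s a y = Q2 s a y) :
    ∀ s a, ∀ y ∈ Set.Ioc (0:ℝ) 1, Q1 s a y = Q2 s a y := by
  obtain ⟨B1, hB1⟩ := hb1
  obtain ⟨B2, hB2⟩ := hb2
  set T : Set ℝ := {d | ∃ s a, ∃ y ∈ Set.Ioc (0:ℝ) 1, d = |Q1 s a y - Q2 s a y|} with hT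
  have hTne : T.Nonempty := by
    refine ⟨_, Classical.arbitrary S, Classical.arbitrary A, 1, ⟨one_pos, le_refl 1⟩, rfl⟩
  have hTbdd : BddAbove T := by
    refine ⟨B1 + B2, fun d hd => ?_⟩
    obtain ⟨s, a, y, hy, rfl⟩ := hd
    have hy' : y ∈ Set.Icc (0:ℝ) 1 := ⟨le_of_lt hy.1, hy.2⟩
    calc |Q1 s a y - Q2 s a y| ≤ |Q1 s a y| + |Q2 s a y| := abs_sub _ _
      _ ≤ B1 + B2 := add_le_add (hB1 s a y hy') (hB2 s a y hy')
  set M : ℝ := sSup T with hMdef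
  have hDleM : ∀ s a, ∀ y ∈ Set.Ioc (0:ℝ) 1, |Q1 s a y - Q2 s a y| ≤ M := by
    intro s a y hy
    exact le_csSup hTbdd ⟨s, a, y, hy, rfl⟩
  have hM0 : 0 ≤ M := by
    obtain ⟨d, s, a, y, hy, rfl⟩ := hTne
    exact le_trans (abs_nonneg _) (hDleM s a y hy)
  -- Key contraction estimate
  have key : ∀ s a, ∀ y ∈ Set.Ioc (0:ℝ) 1, |Q1 s a y - Q2 s a y| ≤ γ * M := by
    intro s a y hy
    obtain ⟨hy0, hy1⟩ := hy
    rw [← hfix1 s a y ⟨hy0, hy1⟩, ← hfix2 s a y ⟨hy0, hy1⟩]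
    unfold bellman
    have hPnn := (hP s a).1
    have hPsum := (hP s a).2
    -- membership in riskEnv gives y * ξ s' ∈ [0,1]
    have hmem : ∀ ξ ∈ riskEnv y (P s a), ∀ s', y * ξ s' ∈ Set.Icc (0:ℝ) 1 := by
      intro ξ hξ s'
      obtain ⟨hξb, -⟩ := hξ
      constructor
      · exact mul_nonneg (le_of_lt hy0) (hξb s').1
      · have := (hξb s').2
        calc y * ξ s' ≤ y * (1 / y) := by
              exact mul_le_mul_of_nonneg_left this (le_of_lt hy0)
          _ = 1 := by field_simp
    -- the value functions
    set V1 : A → ℝ := fun a' =>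
      sSup ((fun ξ : S → ℝ => ∑ s', ξ s' * P s a s' * Q1 s' a' (y * ξ s')) '' riskEnv y (P s a))
      with hV1
    set V2 : A → ℝ := fun a' =>
      sSup ((fun ξ : S → ℝ => ∑ s', ξ s' * P s a s' * Q2 s' a' (y * ξ s')) '' riskEnv y (P s a))
      with hV2
    have hEnvNe : (riskEnv y (P s a)).Nonempty := by
      refine ⟨fun _ => 1, ⟨fun ω => ⟨zero_le_one, ?_⟩, by simpa using hPsum⟩⟩
      rw [le_div_iff₀ hy0, one_mul]; exact hy1
    have hBdd1 : ∀ a', BddAbove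
        ((fun ξ : S → ℝ => ∑ s', ξ s' * P s a s' * Q1 s' a' (y * ξ s')) '' riskEnv y (P s a)) := by
      intro a'
      refine ⟨B1, fun x hx => ?_⟩
      obtain ⟨ξ, hξ, rfl⟩ := hx
      calc ∑ s', ξ s' * P s a s' * Q1 s' a' (y * ξ s')
          ≤ ∑ s', ξ s' * P s a s' * B1 := by
            refine Finset.sum_le_sum fun s' _ => ?_
            have hnn : 0 ≤ ξ s' * P s a s' := mul_nonneg (hξ.1 s').1 (hPnn s')
            exact mul_le_mul_of_nonneg_left
              (le_trans (le_abs_self _) (hB1 s' a' _ (hmem ξ hξ s'))) hnn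
        _ = B1 := by rw [← Finset.sum_mul, hξ.2, one_mul]
    have hBdd2 : ∀ a', BddAbove
        ((fun ξ : S → ℝ => ∑ s', ξ s' * P s a s' * Q2 s' a' (y * ξ s')) '' riskEnv y (P s a)) := by
      intro a'
      refine ⟨B2, fun x hx => ?_⟩
      obtain ⟨ξ, hξ, rfl⟩ := hx
      calc ∑ s', ξ s' * P s a s' * Q2 s' a' (y * ξ s')
          ≤ ∑ s', ξ s' * P s a s' * B2 := by
            refine Finset.sum_le_sum fun s' _ => ?_
            have hnn : 0 ≤ ξ s' * P s a s' := mul_nonneg (hξ.1 s').1 (hPnn s')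
            exact mul_le_mul_of_nonneg_left
              (le_trans (le_abs_self _) (hB2 s' a' _ (hmem ξ hξ s'))) hnn
        _ = B2 := by rw [← Finset.sum_mul, hξ.2, one_mul]
    -- pointwise estimate on the sums
    have core : ∀ ξ ∈ riskEnv y (P s a), ∀ a',
        |(∑ s', ξ s' * P s a s' * Q1 s' a' (y * ξ s')) -
         (∑ s', ξ s' * P s a s' * Q2 s' a' (y * ξ s'))| ≤ M := by
      intro ξ hξ a'
      rw [← Finset.sum_sub_distrib]
      calc |∑ s', (ξ s' * P s a s' * Q1 s' a' (y * ξ s') -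
              ξ s' * P s a s' * Q2 s' a' (y * ξ s'))|
          ≤ ∑ s', |ξ s' * P s a s' * Q1 s' a' (y * ξ s') -
              ξ s' * P s a s' * Q2 s' a' (y * ξ s')| := Finset.abs_sum_le_sum_abs _ _
        _ ≤ ∑ s', ξ s' * P s a s' * M := by
            refine Finset.sum_le_sum fun s' _ => ?_
            have hnn : 0 ≤ ξ s' * P s a s' := mul_nonneg (hξ.1 s').1 (hPnn s')
            rw [← mul_sub, abs_mul, abs_of_nonneg hnn]
            rcases eq_or_lt_of_le (hξ.1 s').1 with h0 | h0
            · rw [← h0]; simp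
            · refine mul_le_mul_of_nonneg_left ?_ hnn
              refine hDleM s' a' (y * ξ s') ⟨mul_pos hy0 h0, (hmem ξ hξ s').2⟩
        _ = M := by rw [← Finset.sum_mul, hξ.2, one_mul]
    -- V1/V2 comparison
    have hV : ∀ a', V1 a' ≤ V2 a' + M ∧ V2 a' ≤ V1 a' + M := by
      intro a'
      constructor
      · refine csSup_le (hEnvNe.image _) fun x hx => ?_
        obtain ⟨ξ, hξ, rfl⟩ := hx
        have h1 := abs_le.mp (core ξ hξ a')
        have h2 : (∑ s', ξ s' * P s a s' * Q2 s' a' (y * ξ s')) ≤ V2 a' :=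
          le_csSup (hBdd2 a') ⟨ξ, hξ, rfl⟩
        linarith [h1.2]
      · refine csSup_le (hEnvNe.image _) fun x hx => ?_
        obtain ⟨ξ, hξ, rfl⟩ := hx
        have h1 := abs_le.mp (core ξ hξ a')
        have h2 : (∑ s', ξ s' * P s a s' * Q1 s' a' (y * ξ s')) ≤ V1 a' :=
          le_csSup (hBdd1 a') ⟨ξ, hξ, rfl⟩
        linarith [h1.1]
    have hinf : |Finset.univ.inf' Finset.univ_nonempty V1 -
        Finset.univ.inf' Finset.univ_nonempty V2| ≤ M := by
      rw [abs_sub_le_iff]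
      constructor
      · have := inf'_le_inf'_add V1 V2 M fun a' => (hV a').1
        linarith
      · have := inf'_le_inf'_add V2 V1 M fun a' => (hV a').2
        linarith
    have : c s a + γ * Finset.univ.inf' Finset.univ_nonempty V1 -
        (c s a + γ * Finset.univ.inf' Finset.univ_nonempty V2) =
        γ * (Finset.univ.inf' Finset.univ_nonempty V1 -
          Finset.univ.inf' Finset.univ_nonempty V2) := by ring
    rw [this, abs_mul, abs_of_nonneg hγ0]
    exact mul_le_mul_of_nonneg_left hinf hγ0
  -- conclude M ≤ γ M, hence M ≤ 0
  have hMle : M ≤ γ * M := by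
    refine csSup_le hTne fun d hd => ?_
    obtain ⟨s, a, y, hy, rfl⟩ := hd
    exact key s a y hy
  have hMzero : M ≤ 0 := by nlinarith
  intro s a y hy
  have := key s a y hy
  have habs : |Q1 s a y - Q2 s a y| ≤ 0 := le_trans this (by nlinarith)
  have hz : Q1 s a y - Q2 s a y = 0 := abs_nonpos_iff.mp habs
  linarith
end
end

section
/- Convex combination of risk envelopes (key step in the proof of Theorem 3): let Ω be a finite nonempty set, p a probability vector on Ω, y1, y2 ∈ (0,1], λ ∈ [0,1], and set y_λ := (1−λ)·y1 + λ·y2 (so y_λ ∈ (0,1]). If ξ1 ∈ U(y1,p) and ξ2 ∈ U(y2,p), then the function ξ defined by ξ(ω) := ((1−λ)·y1·ξ1(ω) + λ·y2·ξ2(ω)) / y_λ belongs to U(y_λ,p). -/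
noncomputable section

/-- Convex combination of risk envelopes (key step in the proof of Theorem 3). -/
theorem riskEnv_convex_comb {Ω : Type*} [Fintype Ω] [Nonempty Ω]
    (p : Ω → ℝ) (hp : (∀ ω, 0 ≤ p ω) ∧ ∑ ω, p ω = 1)
    (y1 y2 lam : ℝ) (hy1 : y1 ∈ Set.Ioc (0:ℝ) 1) (hy2 : y2 ∈ Set.Ioc (0:ℝ) 1)
    (hlam : lam ∈ Set.Icc (0:ℝ) 1)
    (ξ1 ξ2 : Ω → ℝ) (h1 : ξ1 ∈ riskEnv y1 p) (h2 : ξ2 ∈ riskEnv y2 p) :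
    (fun ω => ((1 - lam) * y1 * ξ1 ω + lam * y2 * ξ2 ω) / ((1 - lam) * y1 + lam * y2))
      ∈ riskEnv ((1 - lam) * y1 + lam * y2) p := by
  obtain ⟨hy1p, _⟩ := hy1
  obtain ⟨hy2p, _⟩ := hy2
  obtain ⟨hl0, hl1⟩ := hlam
  obtain ⟨hb1, hs1⟩ := h1
  obtain ⟨hb2, hs2⟩ := h2
  have h1l : 0 ≤ 1 - lam := by linarith
  have hyl : 0 < (1 - lam) * y1 + lam * y2 := by
    rcases eq_or_lt_of_le hl0 with h | h
    · rw [← h]; simpa using hy1p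
    · nlinarith
  constructor
  · intro ω
    obtain ⟨ha1, ha2⟩ := hb1 ω
    obtain ⟨hc1, hc2⟩ := hb2 ω
    constructor
    · positivity
    · rw [div_le_div_iff₀ hyl hyl]
      have e1 : y1 * ξ1 ω ≤ 1 := by
        have := (le_div_iff₀ hy1p).mp ha2
        linarith
      have e2 : y2 * ξ2 ω ≤ 1 := by
        have := (le_div_iff₀ hy2p).mp hc2
        linarith
      nlinarith [mul_nonneg h1l (by linarith : (0:ℝ) ≤ 1 - y1 * ξ1 ω),
        mul_nonneg hl0 (by linarith : (0:ℝ) ≤ 1 - y2 * ξ2 ω), hyl]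
  · have : ∑ ω, ((1 - lam) * y1 * ξ1 ω + lam * y2 * ξ2 ω) / ((1 - lam) * y1 + lam * y2) * p ω
        = ((1 - lam) * y1 * ∑ ω, ξ1 ω * p ω + lam * y2 * ∑ ω, ξ2 ω * p ω)
          / ((1 - lam) * y1 + lam * y2) := by
      rw [Finset.mul_sum, Finset.mul_sum, ← Finset.sum_add_distrib,
        Finset.sum_div]
      congr 1; ext ω; ring
    rw [this, hs1, hs2]
    field_simp
end
end

section
/- Concavity of the CVaR Bellman minimax map (key step in the proof of Theorem 3): let S and A be finite nonempty sets, p a probability vector on S, and for each (s',a') ∈ S × A let g_{s',a'} : [0,1] → ℝ be a bounded concave function. Then the function F : (0,1] → ℝ defined by F(y) := min_{a' ∈ A} sup_{ξ ∈ U(y,p)} Σ_{s' ∈ S} p(s') · g_{s',a'}(y·ξ(s')) is concave on (0,1] (note y·ξ(s') ∈ [0,1] for ξ ∈ U(y,p), so F is well defined). -/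
/-!
Writing `η = y • ξ`, the envelope `U(y, p)` becomes the fiber over `y` of the box `[0,1]^S` under
the linear map `η ↦ ∑ η(s') p(s')`. Each inner supremum is therefore the value of maximizing the
concave function `η ↦ ∑ p(s') g(s', a', η(s'))` over a box cut by a linear constraint at level `y`,
and such a value function is concave in `y`: a convex combination of feasible points is feasible
for the convex combination of the levels. A finite minimum of concave functions is concave.
-/

noncomputable section

open Set Pointwise

theorem ConcaveOn.finset_inf' {𝕜 E β ι : Type*} [Semiring 𝕜] [PartialOrder 𝕜]
    [AddCommMonoid E] [AddCommMonoid β] [LinearOrder β] [IsOrderedAddMonoid β] [SMul 𝕜 E]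
    [Module 𝕜 β] [PosSMulStrictMono 𝕜 β] {s : Set E} {t : Finset ι} (ht : t.Nonempty)
    {f : ι → E → β} (hf : ∀ i ∈ t, ConcaveOn 𝕜 s (f i)) :
    ConcaveOn 𝕜 s (fun x => t.inf' ht (fun i => f i x)) := by
  simpa only [← Finset.inf'_apply] using
    Finset.inf'_induction ht f (p := ConcaveOn 𝕜 s) (fun _ h₁ _ h₂ => h₁.inf h₂) hf

theorem concaveOn_sSup_of_forall_exists_le {E : Type*} [AddCommMonoid E] [Module ℝ E] {s : Set E}
    (hs : Convex ℝ s) {T : E → Set ℝ} (hne : ∀ x ∈ s, (T x).Nonempty)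
    (hbdd : ∀ x ∈ s, BddAbove (T x))
    (h : ∀ x ∈ s, ∀ y ∈ s, ∀ a b : ℝ, 0 ≤ a → 0 ≤ b → a + b = 1 →
      ∀ u ∈ T x, ∀ v ∈ T y, ∃ w ∈ T (a • x + b • y), a * u + b * v ≤ w) :
    ConcaveOn ℝ s (fun x => sSup (T x)) := by
  refine ⟨hs, fun x hx y hy a b ha hb hab => ?_⟩
  have hz : a • x + b • y ∈ s := hs hx hy ha hb hab
  calc a • sSup (T x) + b • sSup (T y) = sSup (a • T x + b • T y) := by
        rw [csSup_add ((hne x hx).smul_set) ((hbdd x hx).smul_of_nonneg ha)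
          ((hne y hy).smul_set) ((hbdd y hy).smul_of_nonneg hb),
          Real.sSup_smul_of_nonneg ha, Real.sSup_smul_of_nonneg hb]
    _ ≤ sSup (T (a • x + b • y)) := by
        refine csSup_le ((hne x hx).smul_set.add (hne y hy).smul_set) ?_
        rintro _ ⟨_, ⟨u, hu, rfl⟩, _, ⟨v, hv, rfl⟩, rfl⟩
        obtain ⟨w, hw, hle⟩ := h x hx y hy a b ha hb hab u hu v hv
        exact le_csSup_of_le (hbdd _ hz) hw hle

theorem ConcaveOn.sSup_image_fiber {E F : Type*} [AddCommGroup E] [Module ℝ E]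
    [AddCommGroup F] [Module ℝ F] {C : Set E} {Φ : E → ℝ} (hΦ : ConcaveOn ℝ C Φ)
    (hbdd : BddAbove (Φ '' C)) (L : E →ₗ[ℝ] F) :
    ConcaveOn ℝ (L '' C) (fun y => sSup (Φ '' (C ∩ L ⁻¹' {y}))) := by
  refine concaveOn_sSup_of_forall_exists_le (hΦ.1.linear_image L) ?_
    (fun _ _ => hbdd.mono (image_mono inter_subset_left)) ?_
  · rintro _ ⟨η, hη, rfl⟩
    exact ⟨Φ η, η, ⟨hη, rfl⟩, rfl⟩
  · rintro _ _ _ _ a b ha hb hab _ ⟨η₁, ⟨hη₁, rfl⟩, rfl⟩ _ ⟨η₂, ⟨hη₂, rfl⟩, rfl⟩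
    refine ⟨Φ (a • η₁ + b • η₂), ⟨_, ⟨hΦ.1 hη₁ hη₂ ha hb hab, ?_⟩, rfl⟩, hΦ.2 hη₁ hη₂ ha hb hab⟩
    simp

theorem concaveOn_sum_mul_apply {ι : Type*} [Fintype ι] {t : ι → Set ℝ} {h : ι → ℝ → ℝ}
    {w : ι → ℝ} (hw : ∀ i, 0 ≤ w i) (hh : ∀ i, ConcaveOn ℝ (t i) (h i)) :
    ConcaveOn ℝ (univ.pi t) (fun η => ∑ i, w i * h i (η i)) := by
  refine ⟨convex_pi fun i _ => (hh i).1, fun η₁ hη₁ η₂ hη₂ a b ha hb hab => ?_⟩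
  simp only [smul_eq_mul, Finset.mul_sum, ← Finset.sum_add_distrib, Pi.add_apply, Pi.smul_apply]
  refine Finset.sum_le_sum fun i _ => ?_
  have := mul_le_mul_of_nonneg_left ((hh i).2 (hη₁ i trivial) (hη₂ i trivial) ha hb hab) (hw i)
  simp only [smul_eq_mul] at this
  linarith

theorem smul_mem_iff_mem_riskEnv {Ω : Type*} [Fintype Ω] {y : ℝ} (hy : 0 < y) {p ξ : Ω → ℝ} :
    y • ξ ∈ Icc 0 1 ∩ Fintype.linearCombination ℝ p ⁻¹' {y} ↔ ξ ∈ riskEnv y p := by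
  have hsum : ∑ ω, y * ξ ω * p ω = y ↔ ∑ ω, ξ ω * p ω = 1 := by
    simp_rw [mul_assoc, ← Finset.mul_sum]
    exact ⟨fun h => mul_left_cancel₀ hy.ne' (h.trans (mul_one y).symm), fun h => by rw [h, mul_one]⟩
  simp only [riskEnv, mem_inter_iff, mem_Icc, Pi.le_def, mem_preimage, mem_singleton_iff,
    Fintype.linearCombination_apply, Pi.smul_apply, Pi.zero_apply, Pi.one_apply, smul_eq_mul,
    mul_nonneg_iff_of_pos_left hy, le_div_iff₀' hy, hsum, mem_ofPred_eq, forall_and]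

theorem smul_riskEnv {Ω : Type*} [Fintype Ω] {y : ℝ} (hy : 0 < y) (p : Ω → ℝ) :
    y • riskEnv y p = Icc 0 1 ∩ Fintype.linearCombination ℝ p ⁻¹' {y} := by
  ext η
  rw [mem_smul_set_iff_inv_smul_mem₀ hy.ne', ← smul_mem_iff_mem_riskEnv hy, smul_inv_smul₀ hy.ne']

theorem cvar_minimax_concave_general {S A : Type*} [Fintype S] [Fintype A] [Nonempty A]
    (p : S → ℝ) (hp : (∀ s', 0 ≤ p s') ∧ ∑ s', p s' = 1)
    (g : S → A → ℝ → ℝ)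
    (hb : ∃ B : ℝ, ∀ s' a', ∀ t ∈ Set.Icc (0:ℝ) 1, |g s' a' t| ≤ B)
    (hconc : ∀ s' a', ConcaveOn ℝ (Set.Icc (0:ℝ) 1) (g s' a')) :
    ConcaveOn ℝ (Set.Ioc (0:ℝ) 1) (fun y =>
      Finset.univ.inf' Finset.univ_nonempty (fun a' : A =>
        sSup ((fun ξ : S → ℝ => ∑ s', p s' * g s' a' (y * ξ s')) '' riskEnv y p))) := by
  obtain ⟨hp₀, hp₁⟩ := hp
  obtain ⟨B, hB⟩ := hb
  have hL : ∀ y : ℝ, Fintype.linearCombination ℝ p (fun _ => y) = y := fun y => by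
    simp [Fintype.linearCombination_apply, ← Finset.mul_sum, hp₁]
  refine ConcaveOn.finset_inf' _ fun a' _ => ?_
  set Φ : (S → ℝ) → ℝ := fun η => ∑ s', p s' * g s' a' (η s')
  have hΦ : ConcaveOn ℝ (Icc 0 1) Φ := by
    rw [← pi_univ_Icc]
    exact concaveOn_sum_mul_apply hp₀ (hconc · a')
  have hΦB : BddAbove (Φ '' Icc 0 1) := by
    refine ⟨B, ?_⟩
    rintro _ ⟨η, hη, rfl⟩
    calc Φ η ≤ ∑ s', p s' * B := Finset.sum_le_sum fun s' _ =>
          mul_le_mul_of_nonneg_left (le_of_abs_le (hB s' a' _ ⟨hη.1 s', hη.2 s'⟩)) (hp₀ s')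
      _ = B := by rw [← Finset.sum_mul, hp₁, one_mul]
  refine ((hΦ.sSup_image_fiber hΦB (Fintype.linearCombination ℝ p)).subset ?_
    (convex_Ioc 0 1)).congr ?_
  · exact fun y hy => ⟨fun _ => y, ⟨fun _ => hy.1.le, fun _ => hy.2⟩, hL y⟩
  · intro y hy
    dsimp only
    rw [← smul_riskEnv hy.1, ← image_smul, image_image]
    rfl

/-- Concavity of the CVaR Bellman minimax map (key step in the proof of Theorem 3). -/
theorem cvar_minimax_concave {S A : Type*} [Fintype S] [Fintype A] [Nonempty S] [Nonempty A]
    (p : S → ℝ) (hp : (∀ s', 0 ≤ p s') ∧ ∑ s', p s' = 1)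
    (g : S → A → ℝ → ℝ)
    (hb : ∃ B : ℝ, ∀ s' a', ∀ t ∈ Set.Icc (0:ℝ) 1, |g s' a' t| ≤ B)
    (hconc : ∀ s' a', ConcaveOn ℝ (Set.Icc (0:ℝ) 1) (g s' a')) :
    ConcaveOn ℝ (Set.Ioc (0:ℝ) 1) (fun y =>
      Finset.univ.inf' Finset.univ_nonempty (fun a' : A =>
        sSup ((fun ξ : S → ℝ => ∑ s', p s' * g s' a' (y * ξ s')) '' riskEnv y p))) :=
  cvar_minimax_concave_general p hp g hb hconc
end
end

section
/- Consensus of CVaR QD-learning (Theorem 2, deterministic vector-recursion form): let G be a connected simple graph on N ≥ 2 vertices with Laplacian matrix L. Let a, b > 0 with a + N·b ≤ 1, let τ1 ∈ (1/2, 1] and τ2 ∈ (0, τ1 − 1/2), and define the weight sequences α_k := a/(k+1)^{τ1} and β_k := b/(k+1)^{τ2} for k ∈ ℕ. Let (w_k)_{k∈ℕ} be a sequence in ℝ^N with ‖w_k‖ ≤ M for all k and some constant M > 0, and let (z_k)_{k∈ℕ} in ℝ^N satisfy z_{k+1} = (I − β_k·L − α_k·I)·z_k + α_k·w_k. Writing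 ẑ_k := z_k − (1/N)·(1ᵀ z_k)·1, we have: for every τ ∈ (0, τ1 − τ2 − 1/2), (k+1)^τ · ẑ_k → 0 as k → ∞; in particular z_k − (1/N)·(1ᵀ z_k)·1 → 0, i.e., all components of z_k asymptotically reach consensus. -/
/-!
Let `P` be the orthogonal projection onto `𝟙ᗮ`. As `L` is symmetric with `L 𝟙 = 0`, the update
`A_k = (1 - α_k) I - β_k L` commutes with `P`, so `ẑ_k = P z_k` satisfies
`ẑ_{k+1} = A_k ẑ_k + α_k P w_k`. Since `L ≤ N I` and `α_k + N β_k ≤ 1`, `A_k` is positive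
semidefinite, and on `𝟙ᗮ` its quadratic form is at most `1 - λ β_k`, where `λ > 0` bounds the
Laplacian form from below on the unit sphere of `𝟙ᗮ` (connectedness makes the form positive
there, compactness gives the uniform bound). Hence `‖ẑ_{k+1}‖ ≤ (1 - λ β_k) ‖ẑ_k‖ + α_k M`.
Multiplying by `(k + 1) ^ τ` yields `v_{k+1} ≤ (1 - γ_k) v_k + γ_k δ_k` with `γ_k ≍ β_k`, so
`∑ γ_k = ∞` because `τ2 < 1`, and `δ_k ≍ k ^ (τ + τ2 - τ1) → 0`; such sequences tend to `0`.
-/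

open Filter Topology Finset
open scoped RealInnerProductSpace

section InnerProductSpace

variable {E : Type*} [NormedAddCommGroup E] [InnerProductSpace ℝ E]

theorem LinearMap.IsPositive.inner_map_sq_le {T : E →ₗ[ℝ] E} (hT : T.IsPositive) (x y : E) :
    ⟪T x, y⟫ ^ 2 ≤ ⟪T x, x⟫ * ⟪T y, y⟫ := by
  have hyx : ⟪T y, x⟫ = ⟪T x, y⟫ := by rw [hT.isSymmetric y x, real_inner_comm]
  have hquad : ∀ t : ℝ, 0 ≤ ⟪T y, y⟫ * (t * t) + (-2 * ⟪T x, y⟫) * t + ⟪T x, x⟫ := by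
    intro t
    have h := hT.inner_nonneg_left (x - t • y)
    simp only [map_sub, map_smul, inner_sub_left, inner_sub_right, inner_smul_left,
      inner_smul_right, RCLike.conj_to_real, hyx] at h
    linarith
  have := discrim_le_zero hquad
  rw [discrim] at this
  nlinarith

theorem LinearMap.IsPositive.norm_map_le_of_inner_map_self_le {T : E →ₗ[ℝ] E}
    (hT : T.IsPositive) {K : Submodule ℝ E} (hK : ∀ x ∈ K, T x ∈ K) {c : ℝ}
    (hc : ∀ x ∈ K, ⟪T x, x⟫ ≤ c * ‖x‖ ^ 2) {x : E} (hx : x ∈ K) : ‖T x‖ ≤ c * ‖x‖ := by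
  have hcx : 0 ≤ c * ‖x‖ := by
    rcases eq_or_ne x 0 with rfl | hx0
    · simp
    · have := (hT.inner_nonneg_left x).trans (hc x hx)
      exact mul_nonneg (nonneg_of_mul_nonneg_left this (by positivity)) (norm_nonneg x)
  -- Cauchy–Schwarz for the form `⟪T ·, ·⟫`, evaluated at `x` and `T x`
  have hcs : (‖T x‖ ^ 2) ^ 2 ≤ (c * ‖x‖ * ‖T x‖) ^ 2 := by
    have h := hT.inner_map_sq_le x (T x)
    rw [real_inner_self_eq_norm_sq] at h
    calc (‖T x‖ ^ 2) ^ 2 ≤ ⟪T x, x⟫ * ⟪T (T x), T x⟫ := h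
      _ ≤ (c * ‖x‖ ^ 2) * (c * ‖T x‖ ^ 2) :=
          mul_le_mul (hc x hx) (hc _ (hK x hx)) (hT.inner_nonneg_left _)
            ((hT.inner_nonneg_left x).trans (hc x hx))
      _ = (c * ‖x‖ * ‖T x‖) ^ 2 := by ring
  have h := (pow_le_pow_iff_left₀ (by positivity) (by positivity) two_ne_zero).1 hcs
  rcases (norm_nonneg (T x)).eq_or_lt with h0 | h0
  · rw [← h0]; exact hcx
  · nlinarith

theorem LinearMap.IsSymmetric.map_mem_orthogonal {T : E →ₗ[ℝ] E} (hT : T.IsSymmetric)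
    {U : Submodule ℝ E} (hU : ∀ u ∈ U, T u ∈ U) {y : E} (hy : y ∈ Uᗮ) : T y ∈ Uᗮ := by
  intro u hu
  rw [← hT u y]
  exact hy _ (hU u hu)

theorem LinearMap.IsSymmetric.starProjection_map {T : E →ₗ[ℝ] E} (hT : T.IsSymmetric)
    {U : Submodule ℝ E} [U.HasOrthogonalProjection] (hU : ∀ u ∈ U, T u ∈ U) (w : E) :
    U.starProjection (T w) = T (U.starProjection w) := by
  refine Submodule.eq_starProjection_of_mem_orthogonal' (hU _ (U.starProjection_apply_mem w))
    (hT.map_mem_orthogonal hU (Uᗮ.starProjection_apply_mem w)) ?_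
  rw [← map_add, Submodule.starProjection_add_starProjection_orthogonal]

theorem LinearMap.exists_pos_mul_norm_sq_le_inner_map_self [FiniteDimensional ℝ E]
    (T : E →ₗ[ℝ] E) (K : Submodule ℝ E) (hpos : ∀ x ∈ K, x ≠ 0 → 0 < ⟪T x, x⟫) :
    ∃ c > 0, ∀ x ∈ K, c * ‖x‖ ^ 2 ≤ ⟪T x, x⟫ := by
  have hhom : ∀ (t : ℝ) (x : E), ⟪T (t • x), t • x⟫ = t ^ 2 * ⟪T x, x⟫ := fun t x => by
    rw [map_smul, inner_smul_left, inner_smul_right, RCLike.conj_to_real]; ring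
  have hcont : Continuous fun x => ⟪T x, x⟫ := T.continuous_of_finiteDimensional.inner continuous_id
  set S := Metric.sphere (0 : E) 1 ∩ K
  have hS : IsCompact S := (isCompact_sphere 0 1).inter_right K.closed_of_finiteDimensional
  rcases S.eq_empty_or_nonempty with hS0 | hSne
  · refine ⟨1, one_pos, fun x hx => ?_⟩
    obtain rfl : x = 0 := by
      by_contra hx0
      refine hS0.subset (⟨?_, K.smul_mem ‖x‖⁻¹ hx⟩ : ‖x‖⁻¹ • x ∈ S)
      simp [norm_smul, hx0]
    simp
  obtain ⟨x₀, ⟨hx₀1, hx₀K⟩, hmin⟩ := hS.exists_isMinOn hSne hcont.continuousOn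
  have hx₀ : ‖x₀‖ = 1 := by simpa using hx₀1
  refine ⟨⟪T x₀, x₀⟫, hpos x₀ hx₀K (by rintro rfl; simp at hx₀), fun x hx => ?_⟩
  rcases eq_or_ne x 0 with rfl | hx0
  · simp
  have hnx : ‖x‖ ≠ 0 := norm_ne_zero_iff.2 hx0
  have hy : ‖x‖⁻¹ • x ∈ S := ⟨by simp [norm_smul, hnx], K.smul_mem _ hx⟩
  calc ⟪T x₀, x₀⟫ * ‖x‖ ^ 2 ≤ ⟪T (‖x‖⁻¹ • x), ‖x‖⁻¹ • x⟫ * ‖x‖ ^ 2 := by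
        gcongr; exact hmin hy
    _ = ⟪T x, x⟫ := by rw [hhom]; field_simp

end InnerProductSpace

section Consensus

variable {V : Type*} [Fintype V]

variable (V) in
def allOnes : EuclideanSpace ℝ V := WithLp.toLp 2 fun _ => 1

theorem inner_allOnes_left (x : EuclideanSpace ℝ V) : ⟪allOnes V, x⟫ = ∑ i, x i := by
  simp [allOnes, EuclideanSpace.inner_eq_star_dotProduct, dotProduct]

theorem norm_allOnes_sq : ‖allOnes V‖ ^ 2 = Fintype.card V := by
  simp [allOnes, EuclideanSpace.real_norm_sq_eq]

theorem starProjection_orthogonal_allOnes_apply (x : EuclideanSpace ℝ V) (i : V) :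
    (ℝ ∙ allOnes V)ᗮ.starProjection x i = x i - (∑ j, x j) / Fintype.card V := by
  rw [Submodule.starProjection_orthogonal_val, Submodule.starProjection_singleton,
    inner_allOnes_left, norm_allOnes_sq]
  simp [allOnes]

theorem tendsto_smul_sub_mean_of_tendsto_mul_norm {ι : Type*} {l : Filter ι} {x : ι → V → ℝ}
    {f : ι → ℝ} (hf : ∀ k, 0 ≤ f k)
    (h : Tendsto (fun k => f k * ‖(ℝ ∙ allOnes V)ᗮ.starProjection (WithLp.toLp 2 (x k))‖) l (𝓝 0)) :
    Tendsto (fun k => f k • fun i => x k i - (∑ j, x k j) / Fintype.card V) l (𝓝 0) := by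
  have hE : Tendsto (fun k => f k • (ℝ ∙ allOnes V)ᗮ.starProjection (WithLp.toLp 2 (x k))) l
      (𝓝 0) := by
    rw [tendsto_zero_iff_norm_tendsto_zero]
    refine h.congr fun k => ?_
    rw [norm_smul, Real.norm_of_nonneg (hf k)]
  have := ((PiLp.continuous_ofLp 2 _).tendsto 0).comp hE
  rw [WithLp.ofLp_zero] at this
  refine this.congr fun k => ?_
  ext i
  simp only [Function.comp_apply, WithLp.ofLp_smul, Pi.smul_apply,
    starProjection_orthogonal_allOnes_apply]

theorem sum_sum_sub_sq (x : V → ℝ) :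
    ∑ i, ∑ j, (x i - x j) ^ 2 = 2 * (Fintype.card V * ∑ i, x i ^ 2) - 2 * (∑ i, x i) ^ 2 := by
  simp only [sub_sq, sum_add_distrib, sum_sub_distrib, sum_const, card_univ, nsmul_eq_mul,
    ← mul_sum, ← sum_mul, sq (∑ i, x i)]
  ring

theorem Matrix.inner_toEuclideanLin_self [DecidableEq V] (A : Matrix V V ℝ)
    (x : EuclideanSpace ℝ V) :
    ⟪A.toEuclideanLin x, x⟫ = A.toLinearMap₂' ℝ (WithLp.ofLp x) (WithLp.ofLp x) := by
  simp [EuclideanSpace.inner_eq_star_dotProduct, Matrix.toLpLin_apply,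
    Matrix.toLinearMap₂'_apply']

variable [DecidableEq V] (G : SimpleGraph V) [DecidableRel G.Adj]

local notation "𝓛" => Matrix.toEuclideanLin (SimpleGraph.lapMatrix ℝ G)

theorem SimpleGraph.lapMatrix_allOnes : 𝓛 (allOnes V) = 0 := by
  rw [allOnes, Matrix.toLpLin_toLp, Matrix.toLin'_apply, G.lapMatrix_mulVec_const_eq_zero]
  rfl

theorem SimpleGraph.inner_lapMatrix_self_le (x : EuclideanSpace ℝ V) :
    ⟪𝓛 x, x⟫ ≤ Fintype.card V * ‖x‖ ^ 2 := by
  rw [Matrix.inner_toEuclideanLin_self, SimpleGraph.lapMatrix_toLinearMap₂',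
    EuclideanSpace.real_norm_sq_eq]
  have hadj : (∑ i, ∑ j, if G.Adj i j then (x i - x j) ^ 2 else 0) ≤ ∑ i, ∑ j, (x i - x j) ^ 2 :=
    sum_le_sum fun i _ => sum_le_sum fun j _ => by split_ifs <;> simp [sq_nonneg]
  have := sum_sum_sub_sq (WithLp.ofLp x)
  nlinarith [sq_nonneg (∑ i, x i)]

variable {G}

theorem SimpleGraph.Connected.inner_lapMatrix_self_pos (hG : G.Connected)
    {x : EuclideanSpace ℝ V} (hx : x ∈ (ℝ ∙ allOnes V)ᗮ) (hx0 : x ≠ 0) : 0 < ⟪𝓛 x, x⟫ := by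
  have hnonneg : 0 ≤ ⟪𝓛 x, x⟫ :=
    (Matrix.isPositive_toEuclideanLin_iff.2 (G.posSemidef_lapMatrix ℝ)).inner_nonneg_left x
  refine hnonneg.lt_of_ne fun h => hx0 ?_
  rw [eq_comm, Matrix.inner_toEuclideanLin_self,
    G.lapMatrix_toLinearMap₂'_apply'_eq_zero_iff_forall_reachable] at h
  obtain ⟨i₀, -⟩ : ∃ i, x i ≠ 0 := by
    by_contra! h0
    exact hx0 (by ext i; simp [h0])
  have hconst : x = x i₀ • allOnes V := by
    ext i; simpa [allOnes] using h i i₀ (hG.preconnected i i₀)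
  rw [Submodule.mem_orthogonal_singleton_iff_inner_right] at hx
  rw [← inner_self_eq_zero (𝕜 := ℝ)]
  nth_rewrite 1 [hconst]
  rw [inner_smul_left, hx, mul_zero]

theorem SimpleGraph.Connected.exists_pos_mul_norm_sq_le_inner_lapMatrix (hG : G.Connected) :
    ∃ c > 0, ∀ x ∈ (ℝ ∙ allOnes V)ᗮ, c * ‖x‖ ^ 2 ≤ ⟪𝓛 x, x⟫ :=
  (𝓛).exists_pos_mul_norm_sq_le_inner_map_self _ fun _ hx hx0 =>
    hG.inner_lapMatrix_self_pos hx hx0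

variable (G) in
noncomputable def SimpleGraph.consensusMap (α β : ℝ) :
    EuclideanSpace ℝ V →ₗ[ℝ] EuclideanSpace ℝ V :=
  Matrix.toEuclideanLin (1 - β • G.lapMatrix ℝ - α • 1)

variable {α β : ℝ}

theorem SimpleGraph.consensusMap_eq : G.consensusMap α β = (1 - α) • LinearMap.id - β • 𝓛 := by
  simp only [consensusMap, map_sub, map_smul, Matrix.toLpLin_one]
  module

theorem SimpleGraph.isSymmetric_consensusMap : (G.consensusMap α β).IsSymmetric := by
  rw [consensusMap_eq]
  exact (LinearMap.IsSymmetric.id.smul (by simp)).sub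
    ((Matrix.isSymmetric_toEuclideanLin_iff.2 (G.isHermitian_lapMatrix ℝ)).smul (by simp))

theorem SimpleGraph.inner_consensusMap_self (x : EuclideanSpace ℝ V) :
    ⟪G.consensusMap α β x, x⟫ = (1 - α) * ‖x‖ ^ 2 - β * ⟪𝓛 x, x⟫ := by
  simp [consensusMap_eq, inner_sub_left, inner_smul_left]

theorem SimpleGraph.consensusMap_mem_orthogonal_allOnes {x : EuclideanSpace ℝ V}
    (hx : x ∈ (ℝ ∙ allOnes V)ᗮ) : G.consensusMap α β x ∈ (ℝ ∙ allOnes V)ᗮ := by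
  refine isSymmetric_consensusMap.map_mem_orthogonal (fun u hu => ?_) hx
  obtain ⟨t, rfl⟩ := Submodule.mem_span_singleton.1 hu
  simp [consensusMap_eq, G.lapMatrix_allOnes, Submodule.smul_mem,
    Submodule.mem_span_singleton_self]

theorem SimpleGraph.norm_consensusMap_le {c : ℝ}
    (hgap : ∀ x ∈ (ℝ ∙ allOnes V)ᗮ, c * ‖x‖ ^ 2 ≤ ⟪𝓛 x, x⟫)
    (hα : 0 ≤ α) (hβ : 0 ≤ β) (hαβ : α + Fintype.card V * β ≤ 1)
    {x : EuclideanSpace ℝ V} (hx : x ∈ (ℝ ∙ allOnes V)ᗮ) :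
    ‖G.consensusMap α β x‖ ≤ (1 - c * β) * ‖x‖ := by
  have hpos : (G.consensusMap α β).IsPositive := by
    refine ⟨isSymmetric_consensusMap, fun y => ?_⟩
    rw [RCLike.re_to_real, inner_consensusMap_self]
    nlinarith [mul_le_mul_of_nonneg_left (G.inner_lapMatrix_self_le y) hβ, sq_nonneg ‖y‖]
  refine hpos.norm_map_le_of_inner_map_self_le
    (fun y hy => consensusMap_mem_orthogonal_allOnes hy) (fun y hy => ?_) hx
  rw [inner_consensusMap_self]
  nlinarith [mul_le_mul_of_nonneg_left (hgap y hy) hβ, sq_nonneg ‖y‖]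

theorem SimpleGraph.norm_starProjection_step_le {c M : ℝ}
    (hgap : ∀ x ∈ (ℝ ∙ allOnes V)ᗮ, c * ‖x‖ ^ 2 ≤ ⟪𝓛 x, x⟫)
    (hα : 0 ≤ α) (hβ : 0 ≤ β) (hαβ : α + Fintype.card V * β ≤ 1) (x y : V → ℝ)
    (hy : √(∑ i, y i ^ 2) ≤ M) :
    ‖(ℝ ∙ allOnes V)ᗮ.starProjection
        (WithLp.toLp 2 ((1 - β • G.lapMatrix ℝ - α • 1).mulVec x + α • y))‖
      ≤ (1 - c * β) * ‖(ℝ ∙ allOnes V)ᗮ.starProjection (WithLp.toLp 2 x)‖ + α * M := by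
  have hy' : ‖WithLp.toLp 2 y‖ ≤ M := by simpa [EuclideanSpace.norm_eq] using hy
  rw [WithLp.toLp_add, WithLp.toLp_smul, map_add, map_smul,
    show WithLp.toLp 2 ((1 - β • G.lapMatrix ℝ - α • 1).mulVec x)
      = G.consensusMap α β (WithLp.toLp 2 x) from rfl,
    isSymmetric_consensusMap.starProjection_map fun _ hu => consensusMap_mem_orthogonal_allOnes hu]
  refine (norm_add_le _ _).trans (add_le_add
    (norm_consensusMap_le hgap hα hβ hαβ (Submodule.starProjection_apply_mem _ _)) ?_)
  rw [norm_smul, Real.norm_of_nonneg hα]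
  gcongr
  exact (Submodule.norm_starProjection_apply_le _ _).trans hy'

end Consensus

section Recursions

theorem tendsto_sum_range_one_div_nat_succ_rpow_atTop {p : ℝ} (hp : p ≤ 1) :
    Tendsto (fun n => ∑ k ∈ range n, 1 / ((k : ℝ) + 1) ^ p) atTop atTop := by
  refine (not_summable_iff_tendsto_nat_atTop_of_nonneg fun k => by positivity).1 ?_
  have := (Real.summable_one_div_nat_rpow (p := p)).not.2 (by linarith)
  rw [← summable_nat_add_iff 1] at this
  simpa using this

theorem tendsto_nat_add_two_rpow_div_rpow {τ σ : ℝ} (hτ : 0 ≤ τ) (hτσ : τ < σ) :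
    Tendsto (fun k : ℕ => ((k : ℝ) + 2) ^ τ / ((k : ℝ) + 1) ^ σ) atTop (𝓝 0) := by
  have hratio : Tendsto (fun k : ℕ => (1 + 1 / ((k : ℝ) + 1)) ^ τ) atTop (𝓝 1) := by
    simpa using (tendsto_one_div_add_atTop_nhds_zero_nat.const_add 1).rpow_const (Or.inr hτ)
  have hdecay := (tendsto_rpow_neg_atTop (sub_pos.2 hτσ)).comp
    (tendsto_atTop_add_const_right _ 1 tendsto_natCast_atTop_atTop)
  have hlim := hratio.mul hdecay
  rw [mul_zero] at hlim
  refine hlim.congr fun k => ?_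
  have hk0 : (0 : ℝ) < k + 1 := by positivity
  have hk2 : (k : ℝ) + 2 = ((k : ℝ) + 1) * (1 + 1 / ((k : ℝ) + 1)) := by field_simp; ring
  rw [Function.comp_apply, hk2, Real.mul_rpow hk0.le (by positivity), Real.rpow_neg hk0.le,
    Real.rpow_sub hk0]
  have := Real.rpow_pos_of_pos hk0 τ
  field_simp

theorem Real.rpow_add_one_le {x τ : ℝ} (hx : 0 < x) (hτ0 : 0 ≤ τ) (hτ1 : τ ≤ 1) :
    (x + 1) ^ τ ≤ x ^ τ * (1 + τ / x) := by
  have hx1 : x + 1 = x * (1 + 1 / x) := by field_simp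
  rw [hx1, Real.mul_rpow hx.le (by positivity), ← mul_one_div τ]
  gcongr
  exact rpow_one_add_le_one_add_mul_self (by linarith [one_div_pos.2 hx]) hτ0 hτ1

variable {u γ : ℕ → ℝ}

theorem tendsto_zero_of_le_one_sub_mul (hu : ∀ k, 0 ≤ u k)
    (hγ : Tendsto (fun n => ∑ k ∈ range n, γ k) atTop atTop)
    (hrec : ∀ᶠ k in atTop, u (k + 1) ≤ (1 - γ k) * u k) : Tendsto u atTop (𝓝 0) := by
  obtain ⟨K, hK⟩ := eventually_atTop.1 hrec
  have hbound : ∀ n ≥ K, u n ≤ Real.exp (-∑ k ∈ Ico K n, γ k) * u K := by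
    intro n hn
    induction n, hn using Nat.le_induction with
    | base => simp
    | succ n hn ih =>
      rw [sum_Ico_succ_top hn, neg_add, Real.exp_add, mul_right_comm]
      calc u (n + 1) ≤ (1 - γ n) * u n := hK n hn
        _ ≤ Real.exp (-γ n) * u n := by
          gcongr
          · exact hu n
          · linarith [Real.add_one_le_exp (-γ n)]
        _ ≤ Real.exp (-γ n) * (Real.exp (-∑ k ∈ Ico K n, γ k) * u K) := by gcongr
        _ = _ := by ring
  have hsum : Tendsto (fun n => ∑ k ∈ Ico K n, γ k) atTop atTop := by
    refine (tendsto_atTop_add_const_right _ (-∑ k ∈ range K, γ k) hγ).congr' ?_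
    filter_upwards [eventually_ge_atTop K] with n hn
    rw [sum_Ico_eq_sub _ hn, sub_eq_add_neg]
  have hlim := (Real.tendsto_exp_neg_atTop_nhds_zero.comp hsum).mul_const (u K)
  rw [zero_mul] at hlim
  exact squeeze_zero' (Eventually.of_forall hu) (eventually_atTop.2 ⟨K, hbound⟩) hlim

theorem tendsto_zero_of_le_one_sub_mul_add {δ : ℕ → ℝ} (hu : ∀ k, 0 ≤ u k)
    (hγ0 : ∀ k, 0 ≤ γ k) (hγ1 : ∀ k, γ k ≤ 1)
    (hγ : Tendsto (fun n => ∑ k ∈ range n, γ k) atTop atTop) (hδ : Tendsto δ atTop (𝓝 0))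
    (hrec : ∀ᶠ k in atTop, u (k + 1) ≤ (1 - γ k) * u k + γ k * δ k) :
    Tendsto u atTop (𝓝 0) := by
  refine tendsto_order.2 ⟨fun a ha => Eventually.of_forall fun k => ha.trans_le (hu k),
    fun ε hε => ?_⟩
  -- once `δ k ≤ ε / 2`, the excess of `u` over `ε / 2` contracts geometrically
  have hexcess : Tendsto (fun k => max (u k - ε / 2) 0) atTop (𝓝 0) := by
    refine tendsto_zero_of_le_one_sub_mul (fun k => le_max_right _ _) hγ ?_
    filter_upwards [hrec, hδ.eventually (eventually_le_nhds (half_pos hε))] with k hk hδk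
    have h1 := hγ1 k
    have h0 := hγ0 k
    refine max_le ?_ (mul_nonneg (by linarith) (le_max_right _ _))
    nlinarith [le_max_left (u k - ε / 2) 0, mul_le_mul_of_nonneg_left hδk h0]
  filter_upwards [hexcess.eventually (eventually_lt_nhds (half_pos hε))] with k hk
  linarith [le_max_left (u k - ε / 2) 0]

theorem tendsto_rpow_mul_of_le_one_sub_two_mul_add {q : ℕ → ℝ} {τ : ℝ} (hu : ∀ k, 0 ≤ u k)
    (hτ0 : 0 ≤ τ) (hτ1 : τ ≤ 1) (hγ0 : ∀ k, 0 < γ k) (hγ1 : ∀ k, 2 * γ k ≤ 1)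
    (hγ : Tendsto (fun n => ∑ k ∈ range n, γ k) atTop atTop)
    (hτγ : ∀ᶠ k : ℕ in atTop, τ / ((k : ℝ) + 1) ≤ γ k)
    (hq : Tendsto (fun k : ℕ => ((k : ℝ) + 2) ^ τ * q k / γ k) atTop (𝓝 0))
    (hrec : ∀ k, u (k + 1) ≤ (1 - 2 * γ k) * u k + q k) :
    Tendsto (fun k : ℕ => ((k : ℝ) + 1) ^ τ * u k) atTop (𝓝 0) := by
  refine tendsto_zero_of_le_one_sub_mul_add (fun k => mul_nonneg (by positivity) (hu k))
    (fun k => (hγ0 k).le)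
    (fun k => by linarith [hγ0 k, hγ1 k]) hγ hq ?_
  filter_upwards [hτγ] with k hk
  have hk1 : (0 : ℝ) < k + 1 := by positivity
  have hweight : ((k : ℝ) + 2) ^ τ * (1 - 2 * γ k) ≤ (1 - γ k) * ((k : ℝ) + 1) ^ τ :=
    calc ((k : ℝ) + 2) ^ τ * (1 - 2 * γ k)
        ≤ ((k : ℝ) + 1) ^ τ * (1 + γ k) * (1 - 2 * γ k) := by
          gcongr
          · linarith [hγ1 k]
          · calc ((k : ℝ) + 2) ^ τ = ((k : ℝ) + 1 + 1) ^ τ := by ring_nf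
              _ ≤ ((k : ℝ) + 1) ^ τ * (1 + τ / ((k : ℝ) + 1)) := Real.rpow_add_one_le hk1 hτ0 hτ1
              _ ≤ _ := by gcongr
      _ ≤ (1 - γ k) * ((k : ℝ) + 1) ^ τ := by
          nlinarith [hγ0 k, Real.rpow_nonneg hk1.le τ,
            mul_nonneg (Real.rpow_nonneg hk1.le τ) (sq_nonneg (γ k))]
  have hcast : ((((k + 1 : ℕ) : ℝ)) + 1) = (k : ℝ) + 2 := by push_cast; ring
  rw [hcast, mul_div_cancel₀ _ (hγ0 k).ne']
  calc ((k : ℝ) + 2) ^ τ * u (k + 1) ≤ ((k : ℝ) + 2) ^ τ * ((1 - 2 * γ k) * u k + q k) := by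
        gcongr; exact hrec k
    _ = ((k : ℝ) + 2) ^ τ * (1 - 2 * γ k) * u k + ((k : ℝ) + 2) ^ τ * q k := by ring
    _ ≤ (1 - γ k) * ((k : ℝ) + 1) ^ τ * u k + ((k : ℝ) + 2) ^ τ * q k := by
        gcongr; exact hu k
    _ = _ := by ring

theorem tendsto_rpow_mul_of_le_one_sub_div_rpow_add {a b τ τ₁ τ₂ : ℝ} (hu : ∀ k, 0 ≤ u k)
    (hb : 0 < b) (hb1 : b ≤ 1) (hτ0 : 0 ≤ τ) (hτ1 : τ ≤ 1) (hτ₂ : 0 ≤ τ₂) (hτ₂1 : τ₂ < 1)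
    (hττ : τ + τ₂ < τ₁)
    (hrec : ∀ k : ℕ, u (k + 1) ≤ (1 - b / ((k : ℝ) + 1) ^ τ₂) * u k + a / ((k : ℝ) + 1) ^ τ₁) :
    Tendsto (fun k : ℕ => ((k : ℝ) + 1) ^ τ * u k) atTop (𝓝 0) := by
  have hk1 (k : ℕ) : (1 : ℝ) ≤ k + 1 := by linarith [k.cast_nonneg (α := ℝ)]
  have hk0 (k : ℕ) : (0 : ℝ) < k + 1 := by positivity
  refine tendsto_rpow_mul_of_le_one_sub_two_mul_add (γ := fun k => b / (2 * ((k : ℝ) + 1) ^ τ₂))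
    (q := fun k => a / ((k : ℝ) + 1) ^ τ₁) hu hτ0 hτ1 (fun k => by positivity) (fun k => ?_)
    ?_ ?_ ?_ (fun k => by simpa [mul_div_assoc', mul_div_mul_left] using hrec k)
  · rw [mul_div_assoc', mul_div_mul_left _ _ two_ne_zero]
    exact (div_le_self hb.le (Real.one_le_rpow (hk1 k) hτ₂)).trans hb1
  · refine ((tendsto_sum_range_one_div_nat_succ_rpow_atTop hτ₂1.le).const_mul_atTop
      (half_pos hb)).congr fun n => ?_
    rw [mul_sum]
    exact sum_congr rfl fun k _ => by field_simp
  · -- `τ / (k + 1) ≤ b / (2 (k + 1) ^ τ₂)` amounts to `2 τ / b ≤ (k + 1) ^ (1 - τ₂)`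
    filter_upwards [((tendsto_rpow_atTop (by linarith : 0 < 1 - τ₂)).comp
      (tendsto_atTop_add_const_right _ 1 tendsto_natCast_atTop_atTop)).eventually_ge_atTop
      (2 * τ / b)] with k hk
    have hsplit : ((k : ℝ) + 1) ^ (1 - τ₂) * ((k : ℝ) + 1) ^ τ₂ = (k : ℝ) + 1 := by
      rw [← Real.rpow_add (hk0 k), sub_add_cancel, Real.rpow_one]
    have hpow := Real.rpow_pos_of_pos (hk0 k) τ₂
    rw [div_le_div_iff₀ (hk0 k) (by positivity)]
    have := (div_le_iff₀ hb).1 hk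
    simp only [Function.comp_apply] at this
    nlinarith [mul_le_mul_of_nonneg_right this hpow.le]
  · have hlim := (tendsto_nat_add_two_rpow_div_rpow hτ0 (by linarith : τ < τ₁ - τ₂)).const_mul
      (2 * a / b)
    rw [mul_zero] at hlim
    refine hlim.congr fun k => ?_
    rw [Real.rpow_sub (hk0 k)]
    have := Real.rpow_pos_of_pos (hk0 k) τ₁
    have := Real.rpow_pos_of_pos (hk0 k) τ₂
    field_simp

end Recursions

theorem cvar_qd_consensus_general (N : ℕ)
    (G : SimpleGraph (Fin N)) [DecidableRel G.Adj] (hconn : G.Connected)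
    (a b : ℝ) (ha : 0 < a) (hb : 0 < b) (hab : a + N * b ≤ 1)
    (τ1 τ2 : ℝ) (hτ1 : τ1 ∈ Set.Ioc (1/2 : ℝ) 1) (hτ2 : τ2 ∈ Set.Ioo (0:ℝ) (τ1 - 1/2))
    (M : ℝ)
    (w : ℕ → Fin N → ℝ)
    (hw : ∀ k, Real.sqrt (∑ i, w k i ^ 2) ≤ M)
    (z : ℕ → Fin N → ℝ)
    (hz : ∀ k : ℕ, z (k + 1) =
      ((1 : Matrix (Fin N) (Fin N) ℝ)
          - (b / ((k : ℝ) + 1) ^ τ2) • G.lapMatrix ℝ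
          - (a / ((k : ℝ) + 1) ^ τ1) • (1 : Matrix (Fin N) (Fin N) ℝ)).mulVec (z k)
        + (a / ((k : ℝ) + 1) ^ τ1) • w k) :
    (∀ τ ∈ Set.Ioo (0:ℝ) (τ1 - τ2 - 1/2),
      Filter.Tendsto
        (fun k : ℕ => ((k : ℝ) + 1) ^ τ • (fun i => z k i - (∑ j, z k j) / N))
        Filter.atTop (nhds 0)) ∧
    Filter.Tendsto (fun k : ℕ => (fun i => z k i - (∑ j, z k j) / N))
      Filter.atTop (nhds 0) := by
  obtain ⟨hτ1, hτ1'⟩ := hτ1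
  obtain ⟨hτ2, hτ2'⟩ := hτ2
  obtain ⟨c₀, hc₀, hgap₀⟩ := hconn.exists_pos_mul_norm_sq_le_inner_lapMatrix
  -- shrinking the spectral-gap constant keeps every contraction factor `1 - c β_k` nonnegative
  set c := min c₀ b⁻¹
  have hcb : c * b ≤ 1 :=
    (mul_le_mul_of_nonneg_right (min_le_right _ _) hb.le).trans_eq (inv_mul_cancel₀ hb.ne')
  have hgap : ∀ x ∈ (ℝ ∙ allOnes (Fin N))ᗮ,
      c * ‖x‖ ^ 2 ≤ ⟪Matrix.toEuclideanLin (G.lapMatrix ℝ) x, x⟫ :=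
    fun x hx => (mul_le_mul_of_nonneg_right (min_le_left _ _) (sq_nonneg _)).trans (hgap₀ x hx)
  set P := (ℝ ∙ allOnes (Fin N))ᗮ.starProjection
  have hstep (k : ℕ) : ‖P (WithLp.toLp 2 (z (k + 1)))‖
      ≤ (1 - c * b / ((k : ℝ) + 1) ^ τ2) * ‖P (WithLp.toLp 2 (z k))‖
        + a * M / ((k : ℝ) + 1) ^ τ1 := by
    have hk1 : (1 : ℝ) ≤ k + 1 := by linarith [k.cast_nonneg (α := ℝ)]
    have hα := div_le_self ha.le (Real.one_le_rpow hk1 (by linarith : 0 ≤ τ1))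
    have hβ := div_le_self hb.le (Real.one_le_rpow hk1 hτ2.le)
    rw [hz k, mul_div_assoc, mul_div_right_comm]
    refine G.norm_starProjection_step_le hgap (by positivity) (by positivity) ?_ _ _ (hw k)
    rw [Fintype.card_fin]
    nlinarith [N.cast_nonneg (α := ℝ)]
  have hrate (τ : ℝ) (hτ0 : 0 ≤ τ) (hτle : τ ≤ 1) (hττ : τ + τ2 < τ1) : Tendsto
      (fun k : ℕ => ((k : ℝ) + 1) ^ τ • fun i => z k i - (∑ j, z k j) / N) atTop (𝓝 0) := by
    simpa only [Fintype.card_fin] using tendsto_smul_sub_mean_of_tendsto_mul_norm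
      (fun k => by positivity) (tendsto_rpow_mul_of_le_one_sub_div_rpow_add (fun k => norm_nonneg _)
        (mul_pos (lt_min hc₀ (inv_pos.2 hb)) hb) hcb hτ0 hτle hτ2.le (by linarith) hττ hstep)
  exact ⟨fun τ hτ => hrate τ hτ.1.le (by linarith [hτ.2]) (by linarith [hτ.2]),
    by simpa using hrate 0 le_rfl zero_le_one (by linarith)⟩

/-- Consensus of CVaR QD-learning (Theorem 2, deterministic vector-recursion
form): components of the iterates asymptotically reach consensus, with rate
`(k+1)^τ` for every `τ ∈ (0, τ1 - τ2 - 1/2)`. -/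
theorem cvar_qd_consensus (N : ℕ) (hN : 2 ≤ N)
    (G : SimpleGraph (Fin N)) [DecidableRel G.Adj] (hconn : G.Connected)
    (a b : ℝ) (ha : 0 < a) (hb : 0 < b) (hab : a + N * b ≤ 1)
    (τ1 τ2 : ℝ) (hτ1 : τ1 ∈ Set.Ioc (1/2 : ℝ) 1) (hτ2 : τ2 ∈ Set.Ioo (0:ℝ) (τ1 - 1/2))
    (M : ℝ) (hM : 0 < M)
    (w : ℕ → Fin N → ℝ)
    (hw : ∀ k, Real.sqrt (∑ i, w k i ^ 2) ≤ M)
    (z : ℕ → Fin N → ℝ)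
    (hz : ∀ k : ℕ, z (k + 1) =
      ((1 : Matrix (Fin N) (Fin N) ℝ)
          - (b / ((k : ℝ) + 1) ^ τ2) • G.lapMatrix ℝ
          - (a / ((k : ℝ) + 1) ^ τ1) • (1 : Matrix (Fin N) (Fin N) ℝ)).mulVec (z k)
        + (a / ((k : ℝ) + 1) ^ τ1) • w k) :
    (∀ τ ∈ Set.Ioo (0:ℝ) (τ1 - τ2 - 1/2),
      Filter.Tendsto
        (fun k : ℕ => ((k : ℝ) + 1) ^ τ • (fun i => z k i - (∑ j, z k j) / N))
        Filter.atTop (nhds 0)) ∧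
    Filter.Tendsto (fun k : ℕ => (fun i => z k i - (∑ j, z k j) / N))
      Filter.atTop (nhds 0) :=
  cvar_qd_consensus_general N G hconn a b ha hb hab τ1 τ2 hτ1 hτ2 M w hw z hz
end

section
/- Scalar comparison lemma used in the consensus proof: let a, b, M > 0, 0 < τ2 < τ1 ≤ 1, and set α_k := a/(k+1)^{τ1} and r_k := b/(k+1)^{τ2}. Let (u_k)_{k∈ℕ} be a sequence of nonnegative real numbers and k0 ∈ ℕ be such that r_k ≤ 1 and u_{k+1} ≤ (1 − r_k)·u_k + α_k·M for all k ≥ k0. Then for every τ ∈ (0, τ1 − τ2), (k+1)^τ · u_k → 0 as k → ∞. -/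
noncomputable section

open Filter Real

private lemma scl_aux_diff (σ : ℝ) (hσ0 : 0 < σ) (hσ1 : σ ≤ 1) (x : ℝ) (hx : 1 ≤ x) :
    x ^ (-σ) - x ^ (-σ - 1) ≤ (x + 1) ^ (-σ) := by
  have hx0 : 0 < x := lt_of_lt_of_le one_pos hx
  have hx1 : 0 < x + 1 := by linarith
  have e1 : x ^ (-σ - 1) = x ^ (-σ) / x := by
    rw [show (-σ - 1 : ℝ) = -σ - 1 from rfl, Real.rpow_sub hx0, Real.rpow_one]
  have hpos : 0 ≤ x ^ (-σ) := Real.rpow_nonneg hx0.le _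
  have key : x ^ (-σ) - x ^ (-σ) / x ≤ x ^ (-σ) * (x / (x + 1)) := by
    have h2 : 1 - 1 / x ≤ x / (x + 1) := by
      have e : 1 - 1 / x = (x - 1) / x := by field_simp
      rw [e, div_le_div_iff₀ hx0 hx1]
      nlinarith
    have := mul_le_mul_of_nonneg_left h2 hpos
    calc x ^ (-σ) - x ^ (-σ) / x = x ^ (-σ) * (1 - 1 / x) := by ring
      _ ≤ x ^ (-σ) * (x / (x + 1)) := this
  have e2 : x ^ (-σ) * (x / (x + 1)) = x ^ (1 - σ) / (x + 1) := by
    rw [show (1 - σ : ℝ) = -σ + 1 from by ring, Real.rpow_add_one hx0.ne']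
    ring
  have e3 : x ^ (1 - σ) ≤ (x + 1) ^ (1 - σ) :=
    Real.rpow_le_rpow hx0.le (by linarith) (by linarith)
  have e4 : (x + 1) ^ (1 - σ) / (x + 1) = (x + 1) ^ (-σ) := by
    rw [div_eq_iff hx1.ne', ← Real.rpow_add_one hx1.ne']
    congr 1
    ring
  calc x ^ (-σ) - x ^ (-σ - 1) = x ^ (-σ) - x ^ (-σ) / x := by rw [e1]
    _ ≤ x ^ (-σ) * (x / (x + 1)) := key
    _ = x ^ (1 - σ) / (x + 1) := e2
    _ ≤ (x + 1) ^ (1 - σ) / (x + 1) := by gcongr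
    _ = (x + 1) ^ (-σ) := e4

/-- Scalar comparison lemma used in the consensus proof. -/
theorem scalar_comparison_lemma (a b M : ℝ) (ha : 0 < a) (hb : 0 < b) (hM : 0 < M)
    (τ1 τ2 : ℝ) (hτ2pos : 0 < τ2) (hτ2lt : τ2 < τ1) (hτ1le : τ1 ≤ 1)
    (u : ℕ → ℝ) (hu : ∀ k, 0 ≤ u k) (k0 : ℕ)
    (hr : ∀ k, k0 ≤ k → b / ((k : ℝ) + 1) ^ τ2 ≤ 1)
    (hrec : ∀ k, k0 ≤ k →
      u (k + 1) ≤ (1 - b / ((k : ℝ) + 1) ^ τ2) * u k + (a / ((k : ℝ) + 1) ^ τ1) * M) :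
    ∀ τ ∈ Set.Ioo (0:ℝ) (τ1 - τ2),
      Filter.Tendsto (fun k : ℕ => ((k : ℝ) + 1) ^ τ * u k) Filter.atTop (nhds 0) := by
  intro τ hτ
  obtain ⟨hτ0, hτlt⟩ := hτ
  set σ := τ1 - τ2 with hσdef
  have hσ0 : 0 < σ := by simp only [hσdef]; linarith
  have hσ1 : σ ≤ 1 := by simp only [hσdef]; linarith
  -- the sequence (k+1)^(τ2-1) tends to 0
  have hnat : Tendsto (fun k : ℕ => ((k : ℝ) + 1)) atTop atTop :=
    tendsto_atTop_add_const_right _ 1 tendsto_natCast_atTop_atTop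
  have hlim : Tendsto (fun k : ℕ => ((k : ℝ) + 1) ^ (τ2 - 1)) atTop (nhds 0) := by
    have h2 : Tendsto (fun x : ℝ => x ^ (τ2 - 1)) atTop (nhds 0) := by
      have := tendsto_rpow_neg_atTop (y := 1 - τ2) (by linarith)
      simpa [neg_sub] using this
    exact h2.comp hnat
  have hev : ∀ᶠ k : ℕ in atTop, ((k : ℝ) + 1) ^ (τ2 - 1) ≤ b / 2 := by
    have : Set.Iic (b / 2) ∈ nhds (0 : ℝ) := Iic_mem_nhds (half_pos hb)
    exact hlim.eventually this
  obtain ⟨K1, hK1⟩ := eventually_atTop.mp hev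
  set K := max K1 k0 with hKdef
  have hKK1 : K1 ≤ K := le_max_left _ _
  have hKk0 : k0 ≤ K := le_max_right _ _
  set C := max (2 * a * M / b) (u K * ((K : ℝ) + 1) ^ σ) with hCdef
  have hC1 : 2 * a * M / b ≤ C := le_max_left _ _
  have hC2 : u K * ((K : ℝ) + 1) ^ σ ≤ C := le_max_right _ _
  have hCpos : 0 < C := lt_of_lt_of_le (by positivity) hC1
  have haMC : a * M ≤ C * b / 2 := by
    rw [div_le_iff₀ hb] at hC1; nlinarith
  -- induction bound
  have hind : ∀ k, K ≤ k → u k ≤ C * ((k : ℝ) + 1) ^ (-σ) := by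
    intro k hk
    induction k, hk using Nat.le_induction with
    | base =>
      have hx : (0 : ℝ) < (K : ℝ) + 1 := by positivity
      have e : ((K : ℝ) + 1) ^ σ * ((K : ℝ) + 1) ^ (-σ) = 1 := by
        rw [← Real.rpow_add hx]; simp
      calc u K = u K * (((K : ℝ) + 1) ^ σ * ((K : ℝ) + 1) ^ (-σ)) := by rw [e, mul_one]
        _ = (u K * ((K : ℝ) + 1) ^ σ) * ((K : ℝ) + 1) ^ (-σ) := by ring
        _ ≤ C * ((K : ℝ) + 1) ^ (-σ) :=
            mul_le_mul_of_nonneg_right hC2 (Real.rpow_nonneg hx.le _)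
    | succ k hk IH =>
      have hk0 : k0 ≤ k := le_trans hKk0 hk
      set x : ℝ := (k : ℝ) + 1 with hxdef
      have hx1 : (1 : ℝ) ≤ x := by rw [hxdef]; exact le_add_of_nonneg_left (Nat.cast_nonneg k)
      have hx0 : (0 : ℝ) < x := lt_of_lt_of_le one_pos hx1
      have h1r : 0 ≤ 1 - b / x ^ τ2 := by linarith [hr k hk0]
      have hxt2 : (0 : ℝ) < x ^ τ2 := Real.rpow_pos_of_pos hx0 _
      have hxt1 : (0 : ℝ) < x ^ τ1 := Real.rpow_pos_of_pos hx0 _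
      have step1 : u (k + 1) ≤ (1 - b / x ^ τ2) * (C * x ^ (-σ)) + (a / x ^ τ1) * M :=
        le_trans (hrec k hk0)
          (by gcongr <;> exact hu k)
      -- rewrite the right-hand side
      have eτ : x ^ (-σ) / x ^ τ2 = x ^ (-τ1) := by
        rw [← Real.rpow_sub hx0]
        congr 1
        rw [hσdef]; ring
      have einv : a / x ^ τ1 = a * x ^ (-τ1) := by
        rw [Real.rpow_neg hx0.le, div_eq_mul_inv]
      have step2 : (1 - b / x ^ τ2) * (C * x ^ (-σ)) + (a / x ^ τ1) * M
          = C * x ^ (-σ) - (C * b) * x ^ (-τ1) + (a * M) * x ^ (-τ1) := by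
        rw [einv]
        have h : b / x ^ τ2 * x ^ (-σ) = b * x ^ (-τ1) := by
          rw [div_mul_eq_mul_div, mul_div_assoc, eτ]
        linear_combination (-C) * h
      -- key comparison
      have hτ2small : x ^ (τ2 - 1) ≤ b / 2 := hK1 k (le_trans hKK1 hk)
      have hsplit : x ^ (-σ - 1) = x ^ (τ2 - 1) * x ^ (-τ1) := by
        rw [← Real.rpow_add hx0]
        congr 1
        rw [hσdef]; ring
      have hxneg1 : (0 : ℝ) ≤ x ^ (-τ1) := Real.rpow_nonneg hx0.le _
      have key : C * x ^ (-σ - 1) ≤ (C * b - a * M) * x ^ (-τ1) := by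
        rw [hsplit]
        calc C * (x ^ (τ2 - 1) * x ^ (-τ1)) ≤ C * ((b / 2) * x ^ (-τ1)) := by
              apply mul_le_mul_of_nonneg_left _ hCpos.le
              exact mul_le_mul_of_nonneg_right hτ2small hxneg1
          _ ≤ (C * b - a * M) * x ^ (-τ1) := by
              nlinarith [mul_le_mul_of_nonneg_right haMC hxneg1]
      have hdiff := scl_aux_diff σ hσ0 hσ1 x hx1
      have final : C * x ^ (-σ) - (C * b) * x ^ (-τ1) + (a * M) * x ^ (-τ1)
          ≤ C * (x + 1) ^ (-σ) := by
        have h3 := mul_le_mul_of_nonneg_left hdiff hCpos.le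
        rw [mul_sub] at h3
        linarith [key]
      have hcast : ((k + 1 : ℕ) : ℝ) + 1 = x + 1 := by push_cast [hxdef]; ring
      rw [hcast]
      calc u (k + 1) ≤ (1 - b / x ^ τ2) * (C * x ^ (-σ)) + (a / x ^ τ1) * M := step1
        _ = C * x ^ (-σ) - (C * b) * x ^ (-τ1) + (a * M) * x ^ (-τ1) := step2
        _ ≤ C * (x + 1) ^ (-σ) := final
  -- squeeze
  have hg : Tendsto (fun k : ℕ => C * ((k : ℝ) + 1) ^ (τ - σ)) atTop (nhds 0) := by
    have h2 : Tendsto (fun x : ℝ => x ^ (τ - σ)) atTop (nhds 0) := by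
      have := tendsto_rpow_neg_atTop (y := σ - τ) (by linarith)
      simpa [neg_sub] using this
    have := (h2.comp hnat).const_mul C
    simpa using this
  apply squeeze_zero' (g := fun k : ℕ => C * ((k : ℝ) + 1) ^ (τ - σ))
  · filter_upwards with k
    have : (0:ℝ) ≤ ((k : ℝ) + 1) ^ τ := Real.rpow_nonneg (by positivity) _
    exact mul_nonneg this (hu k)
  · filter_upwards [eventually_ge_atTop K] with k hk
    have hx0 : (0 : ℝ) < (k : ℝ) + 1 := by positivity
    have := hind k hk
    calc ((k : ℝ) + 1) ^ τ * u k ≤ ((k : ℝ) + 1) ^ τ * (C * ((k : ℝ) + 1) ^ (-σ)) :=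
          mul_le_mul_of_nonneg_left this (Real.rpow_nonneg hx0.le _)
      _ = C * ((k : ℝ) + 1) ^ (τ - σ) := by
          rw [show (τ - σ : ℝ) = τ + (-σ) from by ring, Real.rpow_add hx0]; ring
  · exact hg
end
end

section
/- Dual representation of CVaR for finite probability spaces (Proposition 1, finite form): let Ω be a finite nonempty set, p a probability vector on Ω, Z : Ω → ℝ, and y ∈ (0,1]. Then sup_{ξ ∈ U(y,p)} Σ_ω ξ(ω)·p(ω)·Z(ω) = inf_{w ∈ ℝ} ( w + (1/y)·Σ_ω p(ω)·max(Z(ω) − w, 0) ), and both the supremum and the infimum are attained. -/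
noncomputable section

/-! Weak duality: for `ξ ∈ U(y,p)` and any `w`, `E[ξ Z] = w + E[ξ (Z - w)] ≤ w + E[(Z - w)⁺] / y`,
since `0 ≤ ξ ≤ 1/y`. Equality holds exactly when `ξ = 1/y` on `{Z > w}` and `ξ = 0` on `{Z < w}`.
Taking `w` a `y`-quantile of `Z` (`P(Z > w) ≤ y ≤ P(Z ≥ w)`), such a `ξ ∈ U(y,p)` exists by putting
the remaining mass on the atom `{Z = w}`; this saddle point makes both extrema attained and equal. -/

open Finset

section

variable {Ω : Type*} [Fintype Ω]

def rockafellarUryasev (p Z : Ω → ℝ) (y w : ℝ) : ℝ :=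
  w + (1 / y) * ∑ ω, p ω * max (Z ω - w) 0

lemma sum_le_rockafellarUryasev {p ξ : Ω → ℝ} (hp : ∀ ω, 0 ≤ p ω) {y : ℝ}
    (hξ : ξ ∈ riskEnv y p) (Z : Ω → ℝ) (w : ℝ) :
    ∑ ω, ξ ω * p ω * Z ω ≤ rockafellarUryasev p Z y w := by
  obtain ⟨hξ_bd, hξ_sum⟩ := hξ
  have hterm (ω : Ω) : ξ ω * p ω * (Z ω - w) ≤ 1 / y * (p ω * max (Z ω - w) 0) := by
    obtain ⟨hξ0, hξy⟩ := hξ_bd ω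
    calc ξ ω * p ω * (Z ω - w) ≤ ξ ω * p ω * max (Z ω - w) 0 := by
          gcongr
          · exact mul_nonneg hξ0 (hp ω)
          · exact le_max_left _ _
      _ = ξ ω * (p ω * max (Z ω - w) 0) := mul_assoc _ _ _
      _ ≤ 1 / y * (p ω * max (Z ω - w) 0) := by
          gcongr
          exact mul_nonneg (hp ω) (le_max_right _ _)
  calc ∑ ω, ξ ω * p ω * Z ω = w * ∑ ω, ξ ω * p ω + ∑ ω, ξ ω * p ω * (Z ω - w) := by
        simp only [mul_sum, ← sum_add_distrib]
        exact sum_congr rfl fun ω _ => by ring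
    _ ≤ rockafellarUryasev p Z y w := by
        rw [hξ_sum, mul_one, rockafellarUryasev, mul_sum]
        exact add_le_add_right (sum_le_sum fun ω _ => hterm ω) w

lemma sum_eq_rockafellarUryasev {p ξ : Ω → ℝ} {y : ℝ} (hξ_sum : ∑ ω, ξ ω * p ω = 1)
    {Z : Ω → ℝ} {w : ℝ} (hξ_top : ∀ ω, w < Z ω → ξ ω = 1 / y)
    (hξ_bot : ∀ ω, Z ω < w → ξ ω = 0) :
    ∑ ω, ξ ω * p ω * Z ω = rockafellarUryasev p Z y w := by
  have hterm (ω : Ω) : ξ ω * p ω * Z ω = w * (ξ ω * p ω) + 1 / y * (p ω * max (Z ω - w) 0) := by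
    rcases lt_trichotomy (Z ω) w with hlt | heq | hgt
    · rw [hξ_bot ω hlt, max_eq_right (by linarith)]; ring
    · rw [heq, sub_self, max_self]; ring
    · rw [hξ_top ω hgt, max_eq_left (by linarith)]; ring
  rw [sum_congr rfl fun ω _ => hterm ω, sum_add_distrib, ← mul_sum, ← mul_sum, hξ_sum, mul_one,
    rockafellarUryasev]

lemma exists_quantile [Nonempty Ω] (p Z : Ω → ℝ) {y : ℝ} (hy0 : 0 ≤ y) (hy : y ≤ ∑ ω, p ω) :
    ∃ w, ∑ ω with w < Z ω, p ω ≤ y ∧ y ≤ ∑ ω with w ≤ Z ω, p ω := by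
  obtain ⟨ω₀, -, hω₀⟩ := exists_min_image univ Z univ_nonempty
  set V := (univ.image Z).filter fun v => y ≤ ∑ ω with v ≤ Z ω, p ω
  have hV : V.Nonempty := by
    refine ⟨Z ω₀, mem_filter.2 ⟨mem_image_of_mem Z (mem_univ _), ?_⟩⟩
    rwa [filter_true_of_mem fun ω _ => hω₀ ω (mem_univ ω)]
  refine ⟨V.max' hV, ?_, (mem_filter.1 (V.max'_mem hV)).2⟩
  by_contra! hgt
  obtain ⟨ω₁, hω₁, hmin⟩ := exists_min_image (univ.filter fun ω => V.max' hV < Z ω) Z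
    (nonempty_of_sum_ne_zero (f := p) (by linarith))
  have hω₁ : V.max' hV < Z ω₁ := (mem_filter.1 hω₁).2
  have hsame : (univ.filter fun ω => V.max' hV < Z ω) = univ.filter fun ω => Z ω₁ ≤ Z ω := by
    refine filter_congr fun ω _ => ⟨fun h => hmin ω (mem_filter.2 ⟨mem_univ ω, h⟩),
      fun h => hω₁.trans_le h⟩
  have hmem : Z ω₁ ∈ V := mem_filter.2 ⟨mem_image_of_mem Z (mem_univ _), by
    rw [← hsame]; exact hgt.le⟩
  exact (V.le_max' _ hmem).not_gt hω₁

lemma exists_mem_riskEnv_saddle {p : Ω → ℝ} (hp : ∀ ω, 0 ≤ p ω) {Z : Ω → ℝ} {y w : ℝ}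
    (hy : 0 < y) (hgt : ∑ ω with w < Z ω, p ω ≤ y) (hge : y ≤ ∑ ω with w ≤ Z ω, p ω) :
    ∃ ξ ∈ riskEnv y p, (∀ ω, w < Z ω → ξ ω = 1 / y) ∧ ∀ ω, Z ω < w → ξ ω = 0 := by
  set a := ∑ ω with w < Z ω, p ω
  set m := ∑ ω with Z ω = w, p ω
  have hm0 : 0 ≤ m := sum_nonneg fun ω _ => hp ω
  have hsplit : ∑ ω with w ≤ Z ω, p ω = a + m := by
    simp only [a, m, sum_filter, ← sum_add_distrib]
    refine sum_congr rfl fun ω _ => ?_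
    rcases lt_trichotomy (Z ω) w with h | h | h
    · simp [h.ne, h.not_ge, h.not_gt]
    · simp [h]
    · simp [h, h.le, h.ne']
  -- the atom `{Z = w}` receives exactly the mass `y - a` that the upper tail leaves over
  set θ := (y - a) / m
  have hθm : θ * m = y - a := div_mul_cancel_of_imp fun hm => by linarith
  have hθ0 : 0 ≤ θ := div_nonneg (by linarith) hm0
  have hθ1 : θ ≤ 1 := div_le_one_of_le₀ (by linarith) hm0
  refine ⟨fun ω => (if w < Z ω then 1 else if Z ω = w then θ else 0) / y, ⟨fun ω => ?_, ?_⟩,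
    fun ω h => by simp [h], fun ω h => by simp [h.ne, h.not_gt]⟩
  · dsimp only
    constructor
    · split_ifs <;> positivity
    · gcongr
      split_ifs <;> linarith
  · have hterm (ω : Ω) : (if w < Z ω then 1 else if Z ω = w then θ else 0) / y * p ω
        = ((if w < Z ω then p ω else 0) + θ * (if Z ω = w then p ω else 0)) / y := by
      rcases lt_trichotomy (Z ω) w with h | h | h
      · simp [h.ne, h.not_gt]
      · simp [h]; ring
      · simp [h, h.ne']; ring
    rw [sum_congr rfl fun ω _ => hterm ω, ← sum_div, sum_add_distrib, ← mul_sum, ← sum_filter,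
      ← sum_filter, hθm, add_sub_cancel, div_self hy.ne']

end

/-- Dual representation of CVaR for finite probability spaces
(Proposition 1, finite form): the risk-envelope supremum equals the
Rockafellar–Uryasev infimum, and both are attained. -/
theorem cvar_dual_rockafellar_uryasev {Ω : Type*} [Fintype Ω] [Nonempty Ω]
    (p : Ω → ℝ) (hp : (∀ ω, 0 ≤ p ω) ∧ ∑ ω, p ω = 1)
    (Z : Ω → ℝ) (y : ℝ) (hy : y ∈ Set.Ioc (0:ℝ) 1) :
    sSup ((fun ξ : Ω → ℝ => ∑ ω, ξ ω * p ω * Z ω) '' riskEnv y p)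
        = sInf {r : ℝ | ∃ w : ℝ, r = w + (1 / y) * ∑ ω, p ω * max (Z ω - w) 0} ∧
    sSup ((fun ξ : Ω → ℝ => ∑ ω, ξ ω * p ω * Z ω) '' riskEnv y p)
        ∈ ((fun ξ : Ω → ℝ => ∑ ω, ξ ω * p ω * Z ω) '' riskEnv y p) ∧
    sInf {r : ℝ | ∃ w : ℝ, r = w + (1 / y) * ∑ ω, p ω * max (Z ω - w) 0}
        ∈ {r : ℝ | ∃ w : ℝ, r = w + (1 / y) * ∑ ω, p ω * max (Z ω - w) 0} := by
  obtain ⟨hp0, hp1⟩ := hp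
  obtain ⟨hy0, hy1⟩ := hy
  obtain ⟨w, hgt, hge⟩ := exists_quantile p Z hy0.le (hp1 ▸ hy1)
  obtain ⟨ξ, hξ, hξ_top, hξ_bot⟩ := exists_mem_riskEnv_saddle hp0 hy0 hgt hge
  have hval := sum_eq_rockafellarUryasev hξ.2 hξ_top hξ_bot
  have hmax : IsGreatest ((fun ξ : Ω → ℝ => ∑ ω, ξ ω * p ω * Z ω) '' riskEnv y p)
      (rockafellarUryasev p Z y w) :=
    ⟨⟨ξ, hξ, hval⟩, by rintro _ ⟨η, hη, rfl⟩; exact sum_le_rockafellarUryasev hp0 hη Z w⟩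
  have hmin : IsLeast {r : ℝ | ∃ w : ℝ, r = w + (1 / y) * ∑ ω, p ω * max (Z ω - w) 0}
      (rockafellarUryasev p Z y w) :=
    ⟨⟨w, rfl⟩, by rintro _ ⟨v, rfl⟩; exact hval ▸ sum_le_rockafellarUryasev hp0 hξ Z v⟩
  rw [hmax.csSup_eq, hmin.csInf_eq]
  exact ⟨rfl, hmax.1, hmin.1⟩
end
end
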